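/- Assume hypotheses (H2) and (H4) hold and q⁻ + 1 > p⁺. Then there exist λ* > 0, t > 0 and M > 0 such that for every λ ∈ (0, λ*) and every u ∈ H with ‖u‖ = t one has J_λ(u) ≥ M. -/

import Mathlib

/-!
Take the sphere ‖u‖ = t with t = 1/(T+1). Every difference satisfies |Δu(k-1)| ≤ t ≤ 1, so
|u(k)| ≤ (T+1)t = 1 and (H4) bounds |Σ F(k,u(k))| by Σ c₁(k), independently of u. On the other
hand some difference has |Δu(j-1)| ≥ t/√(T+1), and since |Δ|^p ≥ |Δ|^{p⁺} when |Δ| ≤ 1, the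
p(k)-energy of u is at least (t/√(T+1))^{p⁺}/p⁺ > 0. For λ small the λ-term costs at most half of it.
-/

/-- The norm ‖u‖ = (Σ_{k=1}^{T+1} |Δu(k−1)|²)^{1/2} on H. -/
noncomputable def normH (T : ℕ) (u : ℕ → ℝ) : ℝ :=
  Real.sqrt (∑ k ∈ Finset.Icc 1 (T + 1), |u k - u (k - 1)| ^ 2)

/-- F(k,t) = ∫₀ᵗ f(k,τ) dτ. -/
noncomputable def Fint (f : ℕ → ℝ → ℝ) (k : ℕ) (t : ℝ) : ℝ :=
  ∫ τ in (0:ℝ)..t, f k τ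

/-- The functional J_λ(u) = Σ_{k=1}^{T+1} (1/p(k−1))|Δu(k−1)|^{p(k−1)} − λ Σ_{k=1}^{T} F(k,u(k)). -/
noncomputable def Jlam (T : ℕ) (p : ℕ → ℝ) (f : ℕ → ℝ → ℝ) (lam : ℝ) (u : ℕ → ℝ) : ℝ :=
  (∑ k ∈ Finset.Icc 1 (T + 1), (1 / p (k - 1)) * |u k - u (k - 1)| ^ p (k - 1))
    - lam * ∑ k ∈ Finset.Icc 1 T, Fint f k (u k)

open Finset

lemma abs_sub_le_normH {T k : ℕ} (u : ℕ → ℝ) (hk : k ∈ Icc 1 (T + 1)) :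
    |u k - u (k - 1)| ≤ normH T u :=
  Real.le_sqrt_of_sq_le
    (single_le_sum (f := fun k => |u k - u (k - 1)| ^ 2) (fun _ _ => by positivity) hk)

lemma exists_normH_sq_div_le_sq_abs_sub (T : ℕ) (u : ℕ → ℝ) :
    ∃ k ∈ Icc 1 (T + 1), normH T u ^ 2 / (T + 1) ≤ |u k - u (k - 1)| ^ 2 := by
  apply exists_le_of_sum_le (nonempty_Icc.mpr (by omega))
  have hsum : 0 ≤ ∑ k ∈ Icc 1 (T + 1), |u k - u (k - 1)| ^ 2 := sum_nonneg fun _ _ => by positivity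
  rw [sum_const, Nat.card_Icc, nsmul_eq_mul, normH, Real.sq_sqrt hsum]
  push_cast
  exact (mul_div_cancel₀ _ (by positivity)).le

lemma abs_le_mul_normH {T k : ℕ} {u : ℕ → ℝ} (hu0 : u 0 = 0) (hk : k ≤ T + 1) :
    |u k| ≤ k * normH T u := by
  calc |u k| = |∑ j ∈ range k, (u (j + 1) - u j)| := by rw [sum_range_sub u k, hu0, sub_zero]
    _ ≤ ∑ j ∈ range k, |u (j + 1) - u j| := abs_sum_le_sum_abs _ _
    _ ≤ ∑ _j ∈ range k, normH T u := sum_le_sum fun j hj => by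
        simpa using abs_sub_le_normH (T := T) u (k := j + 1)
          (mem_Icc.mpr ⟨by omega, by have := mem_range.mp hj; omega⟩)
    _ = k * normH T u := by rw [sum_const, card_range, nsmul_eq_mul]

lemma abs_Fint_le {f : ℕ → ℝ → ℝ} {k : ℕ} {c q : ℝ} (hc : 0 ≤ c) (hq : 0 ≤ q)
    (hf : ∀ t, |f k t| ≤ c * |t| ^ q) (s : ℝ) :
    |Fint f k s| ≤ c * |s| ^ q * |s| := by
  have hbound : ∀ τ ∈ Set.uIoc 0 s, ‖f k τ‖ ≤ c * |s| ^ q := fun τ hτ => by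
    have hτs : |τ| ≤ |s| := by
      rcases Set.mem_uIoc.mp hτ with ⟨h1, h2⟩ | ⟨h1, h2⟩
      · rw [abs_of_pos h1, abs_of_pos (h1.trans_le h2)]; exact h2
      · rw [abs_of_nonpos h2, abs_of_neg (h1.trans_le h2)]; linarith
    exact (hf τ).trans (mul_le_mul_of_nonneg_left (Real.rpow_le_rpow (abs_nonneg _) hτs hq) hc)
  simpa [Fint] using intervalIntegral.norm_integral_le_of_norm_le_const hbound

lemma one_div_mul_rpow_le_of_exponent_le {x a b : ℝ} (hx0 : 0 ≤ x) (hx1 : x ≤ 1) (ha : 0 < a)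
    (hab : a ≤ b) : 1 / b * x ^ b ≤ 1 / a * x ^ a :=
  calc 1 / b * x ^ b ≤ 1 / a * x ^ b :=
        mul_le_mul_of_nonneg_right (one_div_le_one_div_of_le ha hab) (Real.rpow_nonneg hx0 b)
    _ ≤ 1 / a * x ^ a :=
        mul_le_mul_of_nonneg_left (Real.rpow_le_rpow_of_exponent_ge' hx0 hx1 ha.le hab)
          (by positivity)

lemma rpow_normH_div_sqrt_le_energy {T : ℕ} {p : ℕ → ℝ} {P : ℝ} (hp : ∀ k ≤ T, 0 < p k)
    (hpP : ∀ k ≤ T, p k ≤ P) {u : ℕ → ℝ} (hu : normH T u ≤ 1) :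
    1 / P * (normH T u / √(T + 1)) ^ P ≤
      ∑ k ∈ Icc 1 (T + 1), 1 / p (k - 1) * |u k - u (k - 1)| ^ p (k - 1) := by
  obtain ⟨j, hj, hjc⟩ := exists_normH_sq_div_le_sq_abs_sub T u
  have hjT : j - 1 ≤ T := by have := (mem_Icc.mp hj).2; omega
  have hP : 0 < P := (hp 0 (Nat.zero_le T)).trans_le (hpP 0 (Nat.zero_le T))
  have hn : 0 ≤ normH T u := Real.sqrt_nonneg _
  have hcj : normH T u / √(T + 1) ≤ |u j - u (j - 1)| := by
    rw [← sq_le_sq₀ (by positivity) (abs_nonneg _), div_pow, Real.sq_sqrt (by positivity)]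
    exact hjc
  calc 1 / P * (normH T u / √(T + 1)) ^ P ≤ 1 / P * |u j - u (j - 1)| ^ P := by
        gcongr
    _ ≤ 1 / p (j - 1) * |u j - u (j - 1)| ^ p (j - 1) :=
        one_div_mul_rpow_le_of_exponent_le (abs_nonneg _) ((abs_sub_le_normH u hj).trans hu)
          (hp _ hjT) (hpP _ hjT)
    _ ≤ _ := single_le_sum (f := fun k => 1 / p (k - 1) * |u k - u (k - 1)| ^ p (k - 1))
        (fun k hk => by
          have := hp (k - 1) (by have := (mem_Icc.mp hk).2; omega)
          have := Real.rpow_nonneg (abs_nonneg (u k - u (k - 1))) (p (k - 1))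
          positivity) hj

lemma abs_sum_Fint_le {T : ℕ} {f : ℕ → ℝ → ℝ} {q c : ℕ → ℝ}
    (hq : ∀ k, 1 ≤ k → k ≤ T → 0 ≤ q k) (hc : ∀ k, 1 ≤ k → k ≤ T → 0 ≤ c k)
    (hf : ∀ k, 1 ≤ k → k ≤ T → ∀ t : ℝ, |f k t| ≤ c k * |t| ^ q k)
    {u : ℕ → ℝ} (hu0 : u 0 = 0) (hu : (T + 1) * normH T u ≤ 1) :
    |∑ k ∈ Icc 1 T, Fint f k (u k)| ≤ ∑ k ∈ Icc 1 T, c k := by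
  refine (abs_sum_le_sum_abs _ _).trans (sum_le_sum fun k hk => ?_)
  obtain ⟨hk1, hkT⟩ := mem_Icc.mp hk
  have huk : |u k| ≤ 1 := by
    refine (abs_le_mul_normH hu0 (by omega : k ≤ T + 1)).trans (le_trans ?_ hu)
    gcongr
    · exact Real.sqrt_nonneg _
    · exact_mod_cast (by omega : k ≤ T + 1)
  calc |Fint f k (u k)| ≤ c k * |u k| ^ q k * |u k| :=
        abs_Fint_le (hc k hk1 hkT) (hq k hk1 hkT) (hf k hk1 hkT) (u k)
    _ ≤ c k * 1 * 1 := by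
        have hck := hc k hk1 hkT
        have hr := Real.rpow_le_one (abs_nonneg _) huk (hq k hk1 hkT)
        gcongr
    _ = c k := by ring

theorem stmt13_general (T : ℕ) (p : ℕ → ℝ) (hp : ∀ k ≤ T + 1, 1 < p k)
    (q : ℕ → ℝ) (hq : ∀ k, 1 ≤ k → k ≤ T → 0 < q k)
    (pp : ℝ) (hpp : IsGreatest (p '' Set.Icc 0 (T + 1)) pp)
    (f : ℕ → ℝ → ℝ)
    -- Hypothesis (H4)
    (c₁ : ℕ → ℝ) (hc₁ : ∀ k, 1 ≤ k → k ≤ T → 0 < c₁ k)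
    (hH4 : ∀ k, 1 ≤ k → k ≤ T → ∀ t : ℝ, |f k t| ≤ c₁ k * |t| ^ q k) :
    ∃ lamStar > (0:ℝ), ∃ t > (0:ℝ), ∃ M > (0:ℝ), ∀ lam : ℝ, 0 < lam → lam < lamStar →
      ∀ u : ℕ → ℝ, u 0 = 0 → u (T + 1) = 0 → normH T u = t →
        M ≤ Jlam T p f lam u := by
  have hp0 : ∀ k ≤ T, 0 < p k := fun k hk => one_pos.trans (hp k (by omega))
  have hpP : ∀ k ≤ T, p k ≤ pp := fun k hk => hpp.2 ⟨k, ⟨k.zero_le, by omega⟩, rfl⟩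
  have hpp0 : 0 < pp := (hp0 0 T.zero_le).trans_le (hpP 0 T.zero_le)
  set t : ℝ := 1 / (T + 1)
  have htT : (T + 1) * t = 1 := mul_one_div_cancel (by positivity)
  have ht1 : t ≤ 1 := div_le_one_of_le₀ (by linarith [T.cast_nonneg (α := ℝ)]) (by positivity)
  set A : ℝ := 1 / pp * (t / √(T + 1)) ^ pp
  set B : ℝ := ∑ k ∈ Icc 1 T, c₁ k
  have hA : 0 < A := by positivity
  have hB : 0 ≤ B := sum_nonneg fun k hk => (hc₁ k (mem_Icc.mp hk).1 (mem_Icc.mp hk).2).le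
  refine ⟨A / (2 * B + 2), by positivity, t, by positivity, A / 2, by positivity, ?_⟩
  intro lam hlam hlamStar u hu0 _ hnorm
  have hE := rpow_normH_div_sqrt_le_energy hp0 hpP (hnorm ▸ ht1)
  have hG := abs_sum_Fint_le (fun k h1 h2 => (hq k h1 h2).le) (fun k h1 h2 => (hc₁ k h1 h2).le) hH4 hu0 (hnorm ▸ htT.le)
  rw [hnorm] at hE
  have hlamB : lam * (2 * B + 2) < A := (lt_div_iff₀ (by positivity)).mp hlamStar
  have hlamG : lam * ∑ k ∈ Icc 1 T, Fint f k (u k) ≤ lam * B :=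
    mul_le_mul_of_nonneg_left ((le_abs_self _).trans hG) hlam.le
  rw [Jlam]
  linarith

theorem stmt13 (T : ℕ) (hT : 1 ≤ T) (p : ℕ → ℝ) (hp : ∀ k ≤ T + 1, 1 < p k)
    (q : ℕ → ℝ) (hq : ∀ k, 1 ≤ k → k ≤ T → 0 < q k)
    (pp : ℝ) (hpp : IsGreatest (p '' Set.Icc 0 (T + 1)) pp)
    (qm : ℝ) (hqm : IsLeast (q '' Set.Icc 1 T) qm)
    (f : ℕ → ℝ → ℝ) (hf : ∀ k, 1 ≤ k → k ≤ T → Continuous (f k))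
    -- Hypothesis (H2)
    (a₁ b₁ : ℕ → ℝ) (ha₁ : ∀ k, 1 ≤ k → k ≤ T → 0 < a₁ k)
    (hH2 : ∀ k, 1 ≤ k → k ≤ T → ∀ t : ℝ, a₁ k * |t| ^ q k + b₁ k ≤ |f k t|)
    -- Hypothesis (H4)
    (c₁ : ℕ → ℝ) (hc₁ : ∀ k, 1 ≤ k → k ≤ T → 0 < c₁ k)
    (hH4 : ∀ k, 1 ≤ k → k ≤ T → ∀ t : ℝ, |f k t| ≤ c₁ k * |t| ^ q k)
    (hpq : pp < qm + 1) :
    ∃ lamStar > (0:ℝ), ∃ t > (0:ℝ), ∃ M > (0:ℝ), ∀ lam : ℝ, 0 < lam → lam < lamStar →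
      ∀ u : ℕ → ℝ, u 0 = 0 → u (T + 1) = 0 → normH T u = t →
        M ≤ Jlam T p f lam u :=
  stmt13_general T p hp q hq pp hpp f c₁ hc₁ hH4
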